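/- arXiv:2507.12779 — 2 statements merged into one kernel-verified Lean document; each statement's English description precedes it below -/
import Mathlib

section
/- The cutoff map k ↦ ϑ(k) is continuous and strictly increasing on (0,1). -/
/-!
Solving the first-order condition for the capacity gives `k = κ(v) := φ(v) F(v)² / G(v)`, so `ϑ`
is the inverse of `κ` on `S = {v : vᴹ < v < v̄, F v > 0}`. Since
`G / (φ F²) = 1 / F + (∫_v^{v̄} φ f) / (φ F²)` and on `S` both `F` and `φ` are positive and
increasing while the tail integral is positive and decreasing, `κ` is increasing on `S`, which
makes `ϑ` strictly increasing. Moreover `ϑ` maps `(0,1)` onto `S`, which is a neighbourhood of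
every `ϑ(k)`, and a monotone map whose image is a neighbourhood of each of its values has no jumps.
-/

open Set MeasureTheory

/-- The virtual value function `φ(v) = v - (1 - F v) / f v`. -/
noncomputable def phi (F f : ℝ → ℝ) (v : ℝ) : ℝ := v - (1 - F v) / f v

/-- The function `G(v) = φ(v)·F(v) + ∫_v^{v̄} φ(s)·f(s) ds`. -/
noncomputable def Gfun (F f : ℝ → ℝ) (vhi : ℝ) (v : ℝ) : ℝ :=
  phi F f v * F v + ∫ s in v..vhi, phi F f s * f s

theorem Set.LeftInvOn.strictMonoOn_of_monotoneOn {α β : Type*} [Preorder α] [LinearOrder β]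
    {κ : β → α} {θ : α → β} {s : Set α} {t : Set β} (hinv : LeftInvOn κ θ s)
    (hθ : MapsTo θ s t) (hκ : MonotoneOn κ t) : StrictMonoOn θ s := by
  intro k₁ hk₁ k₂ hk₂ hk
  by_contra! hle
  exact hk.not_ge <| by simpa only [hinv hk₁, hinv hk₂] using hκ (hθ hk₂) (hθ hk₁) hle

lemma mul_sq_div_mem_Ioo {p a I : ℝ} (hp : 0 < p) (ha : 0 < a) (ha1 : a ≤ 1) (hI : 0 < I) :
    p * a ^ 2 / (p * a + I) ∈ Ioo 0 1 := by
  have hpa : 0 < p * a := mul_pos hp ha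
  refine ⟨by positivity, (div_lt_one (by positivity)).2 ?_⟩
  nlinarith [mul_le_mul_of_nonneg_left ha1 hpa.le]

lemma mul_sq_div_le_mul_sq_div {p q a b I J : ℝ} (hp : 0 < p) (hpq : p ≤ q) (ha : 0 < a)
    (hab : a ≤ b) (hJ : 0 ≤ J) (hJI : J ≤ I) :
    p * a ^ 2 / (p * a + I) ≤ q * b ^ 2 / (q * b + J) := by
  have hq : 0 < q := hp.trans_le hpq
  have hb : 0 < b := ha.trans_le hab
  have hI : 0 ≤ I := hJ.trans hJI
  rw [div_le_div_iff₀ (by positivity) (by positivity)]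
  have hsurplus : p * a ^ 2 * (q * b) ≤ q * b ^ 2 * (p * a) := by
    nlinarith [mul_le_mul_of_nonneg_left hab (mul_pos (mul_pos (mul_pos hp hq) ha) hb).le]
  have htail : p * a ^ 2 * J ≤ q * b ^ 2 * I := by gcongr
  linarith

section TailIntegral

variable {g : ℝ → ℝ} {c b : ℝ}

lemma integral_pos_of_pos_on_Ioc (hg : ContinuousOn g (Icc c b))
    (hpos : ∀ x ∈ Ioc c b, 0 < g x) {v : ℝ} (hv : v ∈ Ioo c b) : 0 < ∫ x in v..b, g x :=
  intervalIntegral.intervalIntegral_pos_of_pos_on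
    ((hg.mono (Icc_subset_Icc hv.1.le le_rfl)).intervalIntegrable_of_Icc hv.2.le)
    (fun x hx => hpos x ⟨hv.1.trans hx.1, hx.2.le⟩) hv.2

lemma antitoneOn_integral_of_nonneg_on_Ioc (hg : ContinuousOn g (Icc c b))
    (hnonneg : ∀ x ∈ Ioc c b, 0 ≤ g x) :
    AntitoneOn (fun v => ∫ x in v..b, g x) (Ioc c b) := by
  intro v hv w hw hvw
  refine intervalIntegral.integral_mono_interval hvw hw.2 le_rfl ?_
    ((hg.mono (Icc_subset_Icc hv.1.le le_rfl)).intervalIntegrable_of_Icc hv.2)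
  filter_upwards [ae_restrict_mem measurableSet_Ioc] with x hx
  exact hnonneg x ⟨hv.1.trans hx.1, hx.2⟩

end TailIntegral

/-- The capacity `k` for which `v` solves the first-order condition `k·G(v) = φ(v)·F(v)²`. -/
noncomputable def cutoffCapacity (F f : ℝ → ℝ) (vhi v : ℝ) : ℝ :=
  phi F f v * F v ^ 2 / Gfun F f vhi v

section Cutoff

variable {F f : ℝ → ℝ} {vM vhi : ℝ}

lemma continuousOn_phi {s : Set ℝ} (hF : ContinuousOn F s) (hf : ContinuousOn f s)
    (hf0 : ∀ v ∈ s, f v ≠ 0) : ContinuousOn (phi F f) s :=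
  continuousOn_id.sub ((continuousOn_const.sub hF).div hf hf0)

lemma phi_pos_of_mem_Ioc (hφ : StrictMonoOn (phi F f) (Icc vM vhi)) (hφM : 0 ≤ phi F f vM)
    {v : ℝ} (hv : v ∈ Ioc vM vhi) : 0 < phi F f v :=
  hφM.trans_lt (hφ (left_mem_Icc.2 (hv.1.le.trans hv.2)) (Ioc_subset_Icc_self hv) hv.1)

lemma phi_mul_pos_of_mem_Ioc (hφ : StrictMonoOn (phi F f) (Icc vM vhi))
    (hφM : 0 ≤ phi F f vM) (hf : ∀ v ∈ Icc vM vhi, 0 < f v) :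
    ∀ v ∈ Ioc vM vhi, 0 < phi F f v * f v := fun v hv =>
  mul_pos (phi_pos_of_mem_Ioc hφ hφM hv) (hf v (Ioc_subset_Icc_self hv))

lemma Gfun_pos (hφ : StrictMonoOn (phi F f) (Icc vM vhi)) (hφM : 0 ≤ phi F f vM)
    (hf : ∀ v ∈ Icc vM vhi, 0 < f v)
    (hg : ContinuousOn (fun s => phi F f s * f s) (Icc vM vhi))
    {v : ℝ} (hv : v ∈ Ioo vM vhi) (hFv : 0 < F v) : 0 < Gfun F f vhi v :=
  add_pos (mul_pos (phi_pos_of_mem_Ioc hφ hφM (Ioo_subset_Ioc_self hv)) hFv)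
    (integral_pos_of_pos_on_Ioc hg (phi_mul_pos_of_mem_Ioc hφ hφM hf) hv)

lemma cutoffCapacity_mem_Ioo (hφ : StrictMonoOn (phi F f) (Icc vM vhi))
    (hφM : 0 ≤ phi F f vM) (hf : ∀ v ∈ Icc vM vhi, 0 < f v)
    (hg : ContinuousOn (fun s => phi F f s * f s) (Icc vM vhi))
    (hF : MonotoneOn F (Icc vM vhi)) (hF1 : F vhi = 1)
    {v : ℝ} (hv : v ∈ Ioo vM vhi) (hFv : 0 < F v) : cutoffCapacity F f vhi v ∈ Ioo 0 1 :=
  mul_sq_div_mem_Ioo (phi_pos_of_mem_Ioc hφ hφM (Ioo_subset_Ioc_self hv)) hFv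
    (hF1 ▸ hF (Ioo_subset_Icc_self hv) (right_mem_Icc.2 (hv.1.trans hv.2).le) hv.2.le)
    (integral_pos_of_pos_on_Ioc hg (phi_mul_pos_of_mem_Ioc hφ hφM hf) hv)

lemma monotoneOn_cutoffCapacity (hφ : StrictMonoOn (phi F f) (Icc vM vhi))
    (hφM : 0 ≤ phi F f vM) (hf : ∀ v ∈ Icc vM vhi, 0 < f v)
    (hg : ContinuousOn (fun s => phi F f s * f s) (Icc vM vhi))
    (hF : MonotoneOn F (Icc vM vhi)) :
    MonotoneOn (cutoffCapacity F f vhi) {v | v ∈ Ioo vM vhi ∧ 0 < F v} := by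
  rintro v ⟨hv, hFv⟩ w ⟨hw, -⟩ hvw
  exact mul_sq_div_le_mul_sq_div (phi_pos_of_mem_Ioc hφ hφM (Ioo_subset_Ioc_self hv))
    (hφ.monotoneOn (Ioo_subset_Icc_self hv) (Ioo_subset_Icc_self hw) hvw) hFv
    (hF (Ioo_subset_Icc_self hv) (Ioo_subset_Icc_self hw) hvw)
    (integral_pos_of_pos_on_Ioc hg (phi_mul_pos_of_mem_Ioc hφ hφM hf) hw).le
    (antitoneOn_integral_of_nonneg_on_Ioc hg
      (fun x hx => (phi_mul_pos_of_mem_Ioc hφ hφM hf x hx).le)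
      (Ioo_subset_Ioc_self hv) (Ioo_subset_Ioc_self hw) hvw)

end Cutoff

theorem stmt_9_general
    (vlo vhi : ℝ)
    (F f : ℝ → ℝ) (hFmono : Monotone F)
    (hFhi : F vhi = 1)
    (hFderiv : ∀ v ∈ Set.Icc vlo vhi, HasDerivAt F (f v) v)
    (hfpos : ∀ v ∈ Set.Icc vlo vhi, 0 < f v)
    (hfdiff : DifferentiableOn ℝ f (Set.Icc vlo vhi))
    (hreg : StrictMonoOn (phi F f) (Set.Icc vlo vhi))
    (vM : ℝ) (hvM : IsLeast {v ∈ Set.Icc vlo vhi | 0 ≤ phi F f v} vM)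
    (FInv : ℝ → ℝ)
    (hFInv : ∀ k ∈ Set.Ioo (0:ℝ) 1, FInv k ∈ Set.Icc vlo vhi ∧ F (FInv k) = k)
    (θ : ℝ → ℝ)
    (hθ : ∀ k ∈ Set.Ioo (0:ℝ) 1, θ k ∈ Set.Icc vlo vhi ∧
      k * Gfun F f vhi (θ k) = phi F f (θ k) * (F (θ k)) ^ 2)
    (hθuniq : ∀ k ∈ Set.Ioo (0:ℝ) 1, ∀ v ∈ Set.Icc vlo vhi,
      k * Gfun F f vhi v = phi F f v * (F v) ^ 2 → v = θ k)
    (hθloc : ∀ k ∈ Set.Ioo (0:ℝ) 1, θ k ∈ Set.Ioo (max vM (FInv k)) vhi)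
    :
    ContinuousOn θ (Set.Ioo (0:ℝ) 1) ∧ StrictMonoOn θ (Set.Ioo (0:ℝ) 1) := by
  obtain ⟨⟨hvMlo, -⟩, hφM⟩ := hvM.1
  have hsub : Icc vM vhi ⊆ Icc vlo vhi := Icc_subset_Icc hvMlo le_rfl
  have hφ := hreg.mono hsub
  have hf : ∀ v ∈ Icc vM vhi, 0 < f v := fun v hv => hfpos v (hsub hv)
  have hFcont : ContinuousOn F (Icc vlo vhi) := fun v hv =>
    (hFderiv v hv).continuousAt.continuousWithinAt
  have hg : ContinuousOn (fun s => phi F f s * f s) (Icc vM vhi) :=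
    ((continuousOn_phi hFcont hfdiff.continuousOn fun v hv => (hfpos v hv).ne').mul
      hfdiff.continuousOn).mono hsub
  set S := {v | v ∈ Ioo vM vhi ∧ 0 < F v}
  have hIooS : ∀ k ∈ Ioo (0:ℝ) 1, Ioo (max vM (FInv k)) vhi ⊆ S := fun k hk v hv =>
    ⟨⟨(le_max_left _ _).trans_lt hv.1, hv.2⟩, hk.1.trans_le <|
      (hFInv k hk).2 ▸ hFmono ((le_max_right _ _).trans hv.1.le)⟩
  have hθS : MapsTo θ (Ioo 0 1) S := fun k hk => hIooS k hk (hθloc k hk)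
  have hinv : LeftInvOn (cutoffCapacity F f vhi) θ (Ioo 0 1) := fun k hk =>
    eq_div_of_mul_eq (Gfun_pos hφ hφM hf hg (hθS hk).1 (hθS hk).2).ne' (hθ k hk).2 |>.symm
  have hsurj : S ⊆ θ '' Ioo 0 1 := fun v hv => by
    have hk := cutoffCapacity_mem_Ioo hφ hφM hf hg (hFmono.monotoneOn _) hFhi hv.1 hv.2
    refine ⟨_, hk, (hθuniq _ hk v (hsub (Ioo_subset_Icc_self hv.1)) ?_).symm⟩
    exact div_mul_cancel₀ _ (Gfun_pos hφ hφM hf hg hv.1 hv.2).ne'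
  have hmono : StrictMonoOn θ (Ioo 0 1) := hinv.strictMonoOn_of_monotoneOn hθS
    (monotoneOn_cutoffCapacity hφ hφM hf hg (hFmono.monotoneOn _))
  refine ⟨fun k hk => (hmono.continuousAt_of_image_mem_nhds (Ioo_mem_nhds hk.1 hk.2)
    ?_).continuousWithinAt, hmono⟩
  exact Filter.mem_of_superset (Ioo_mem_nhds (hθloc k hk).1 (hθloc k hk).2)
    ((hIooS k hk).trans hsurj)

/-- the cutoff map `k ↦ ϑ(k)` is continuous and strictly increasing
on `(0,1)`. -/
theorem stmt_9
    (vlo vhi : ℝ) (hvlo : 0 ≤ vlo) (hlt : vlo < vhi)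
    (F f : ℝ → ℝ) (hFmono : Monotone F)
    (hFlo : F vlo = 0) (hFhi : F vhi = 1)
    (hFderiv : ∀ v ∈ Set.Icc vlo vhi, HasDerivAt F (f v) v)
    (hfpos : ∀ v ∈ Set.Icc vlo vhi, 0 < f v)
    (hfdiff : DifferentiableOn ℝ f (Set.Icc vlo vhi))
    (hreg : StrictMonoOn (phi F f) (Set.Icc vlo vhi))
    (vM : ℝ) (hvM : IsLeast {v ∈ Set.Icc vlo vhi | 0 ≤ phi F f v} vM)
    (FInv : ℝ → ℝ)
    (hFInv : ∀ k ∈ Set.Ioo (0:ℝ) 1, FInv k ∈ Set.Icc vlo vhi ∧ F (FInv k) = k)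
    (θ : ℝ → ℝ)
    (hθ : ∀ k ∈ Set.Ioo (0:ℝ) 1, θ k ∈ Set.Icc vlo vhi ∧
      k * Gfun F f vhi (θ k) = phi F f (θ k) * (F (θ k)) ^ 2)
    (hθuniq : ∀ k ∈ Set.Ioo (0:ℝ) 1, ∀ v ∈ Set.Icc vlo vhi,
      k * Gfun F f vhi v = phi F f v * (F v) ^ 2 → v = θ k)
    (hθloc : ∀ k ∈ Set.Ioo (0:ℝ) 1, θ k ∈ Set.Ioo (max vM (FInv k)) vhi)
    :
    ContinuousOn θ (Set.Ioo (0:ℝ) 1) ∧ StrictMonoOn θ (Set.Ioo (0:ℝ) 1) :=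
  stmt_9_general vlo vhi F f hFmono hFhi hFderiv hfpos hfdiff hreg vM hvM FInv hFInv θ hθ hθuniq
    hθloc
end

section
/- The monopolist's surplus P(k) := ϑ(k)·(1 − k/F(ϑ(k)))·(1 − F(ϑ(k))) is strictly decreasing in k on (0,1). -/
open Set MeasureTheory

section Order

variable {s t : Set ℝ} {a r x g θ : ℝ → ℝ}

theorem StrictMonoOn.mul_of_pos (ha : StrictMonoOn a s) (hx : StrictMonoOn x s)
    (ha0 : ∀ v ∈ s, 0 < a v) (hx0 : ∀ v ∈ s, 0 < x v) :
    StrictMonoOn (fun v => a v * x v) s :=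
  fun _ hu _ hv huv => mul_lt_mul'' (ha hu hv huv) (hx hu hv huv) (ha0 _ hu).le (hx0 _ hu).le

theorem StrictMonoOn.div_add_of_strictAntiOn (ha : StrictMonoOn a s) (hr : StrictAntiOn r s)
    (ha0 : ∀ v ∈ s, 0 < a v) (hr0 : ∀ v ∈ s, 0 < r v) :
    StrictMonoOn (fun v => a v / (a v + r v)) s := by
  intro u hu v hv huv
  have hau := ha0 u hu
  have hrv := hr0 v hv
  have hauv := ha hu hv huv
  have hruv := hr hu hv huv
  rw [div_lt_div_iff₀ (by linarith) (by linarith)]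
  nlinarith [mul_lt_mul'' hauv hruv hau.le hrv.le]

theorem StrictAntiOn.sq_div_add_of_strictMonoOn (hr : StrictAntiOn r s) (ha : StrictMonoOn a s)
    (ha0 : ∀ v ∈ s, 0 < a v) (hr0 : ∀ v ∈ s, 0 < r v) :
    StrictAntiOn (fun v => r v ^ 2 / (a v + r v)) s := by
  intro u hu v hv huv
  have hau := ha0 u hu
  have hrv := hr0 v hv
  have hauv := ha hu hv huv
  have hruv := hr hu hv huv
  rw [div_lt_div_iff₀ (by linarith) (by linarith)]
  have hsq : r v ^ 2 < r u ^ 2 := pow_lt_pow_left₀ hruv hrv.le two_ne_zero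
  nlinarith [mul_lt_mul'' hsq hauv (sq_nonneg _) hau.le,
    mul_pos (mul_pos hrv hrv) (sub_pos.2 hruv)]

theorem StrictMonoOn.of_leftInvOn (hg : StrictMonoOn g s) (hθ : MapsTo θ t s)
    (hinv : LeftInvOn g θ t) : StrictMonoOn θ t :=
  fun k hk l hl hkl => (hg.lt_iff_lt (hθ hk) (hθ hl)).1 (by rwa [hinv hk, hinv hl])

theorem StrictMonoOn.pos_of_isLeast {lo hi m v : ℝ} (hg : StrictMonoOn g (Icc lo hi))
    (hm : IsLeast {v ∈ Icc lo hi | 0 ≤ g v} m) (hv : v ∈ Ioc m hi) : 0 < g v :=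
  hm.1.2.trans_lt (hg hm.1.1 ⟨hm.1.1.1.trans hv.1.le, hv.2⟩ hv.1)

end Order

section FirstOrderCondition

variable {k p x v : ℝ}

theorem mul_div_eq_of_foc (hfoc : k * (p * x + v * (1 - x)) = p * x ^ 2)
    (hG : p * x + v * (1 - x) ≠ 0) : x * (p * x / (p * x + v * (1 - x))) = k := by
  rw [← mul_div_assoc, div_eq_iff hG]
  linear_combination -hfoc

theorem surplus_eq_of_foc (hfoc : k * (p * x + v * (1 - x)) = p * x ^ 2) (hx : x ≠ 0)
    (hG : p * x + v * (1 - x) ≠ 0) :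
    v * (1 - k / x) * (1 - x) = (v * (1 - x)) ^ 2 / (p * x + v * (1 - x)) := by
  have hkx : k / x * x = k := div_mul_cancel₀ k hx
  have hq : k / x * (p * x + v * (1 - x)) = p * x := by
    apply mul_right_cancel₀ hx
    linear_combination hfoc + (p * x + v * (1 - x)) * hkx
  rw [eq_div_iff hG]
  linear_combination (-(v * (1 - x))) * hq

theorem strictAntiOn_surplus_of_foc {s t : Set ℝ} {p x θ : ℝ → ℝ}
    (hp : StrictMonoOn p s) (hx : StrictMonoOn x s) (hr : StrictAntiOn (fun v => v * (1 - x v)) s)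
    (hp0 : ∀ v ∈ s, 0 < p v) (hx0 : ∀ v ∈ s, 0 < x v) (hr0 : ∀ v ∈ s, 0 < v * (1 - x v))
    (hθ : MapsTo θ t s)
    (hfoc : ∀ k ∈ t, k * (p (θ k) * x (θ k) + θ k * (1 - x (θ k))) = p (θ k) * x (θ k) ^ 2) :
    StrictAntiOn (fun k => θ k * (1 - k / x (θ k)) * (1 - x (θ k))) t := by
  have ha0 : ∀ v ∈ s, 0 < p v * x v := fun v hv => mul_pos (hp0 v hv) (hx0 v hv)
  have hG0 : ∀ v ∈ s, p v * x v + v * (1 - x v) ≠ 0 := fun v hv =>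
    (add_pos (ha0 v hv) (hr0 v hv)).ne'
  have ha := hp.mul_of_pos hx hp0 hx0
  have hθmono : StrictMonoOn θ t :=
    (hx.mul_of_pos (ha.div_add_of_strictAntiOn hr ha0 hr0) hx0
      (fun v hv => div_pos (ha0 v hv) (add_pos (ha0 v hv) (hr0 v hv)))).of_leftInvOn hθ
      fun k hk => mul_div_eq_of_foc (hfoc k hk) (hG0 _ (hθ hk))
  refine ((hr.sq_div_add_of_strictMonoOn ha ha0 hr0).comp_strictMonoOn hθmono hθ).congr
    fun k hk => ?_
  exact (surplus_eq_of_foc (hfoc k hk) (hx0 _ (hθ hk)).ne' (hG0 _ (hθ hk))).symm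

end FirstOrderCondition

section VirtualValue

variable {F f : ℝ → ℝ} {lo hi v : ℝ}

theorem phi_mul_eq (hf : f v ≠ 0) : phi F f v * f v = v * f v + F v - 1 := by
  rw [phi, sub_mul, div_mul_cancel₀ _ hf]
  ring

theorem hasDerivAt_revenue (hF : HasDerivAt F (f v) v) (hf : f v ≠ 0) :
    HasDerivAt (fun v => v * (1 - F v)) (-(phi F f v * f v)) v := by
  refine ((hasDerivAt_id v).mul ((hasDerivAt_const v (1 : ℝ)).sub hF)).congr_deriv ?_
  rw [phi_mul_eq hf]
  simp only [id, Pi.sub_apply]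
  ring

theorem integral_phi_mul (hF : ∀ v ∈ Icc lo hi, HasDerivAt F (f v) v)
    (hf : ∀ v ∈ Icc lo hi, f v ≠ 0) (hfc : ContinuousOn f (Icc lo hi)) (hv : v ∈ Icc lo hi) :
    ∫ s in v..hi, phi F f s * f s = v * (1 - F v) - hi * (1 - F hi) := by
  have hsub : uIcc v hi ⊆ Icc lo hi := by
    rw [uIcc_of_le hv.2]
    exact Icc_subset_Icc_left hv.1
  have hFc : ContinuousOn F (Icc lo hi) := fun v hv => (hF v hv).continuousAt.continuousWithinAt
  have hphic : ContinuousOn (phi F f) (Icc lo hi) :=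
    continuousOn_id.sub ((continuousOn_const.sub hFc).div hfc hf)
  rw [intervalIntegral.integral_eq_sub_of_hasDerivAt (f := fun v => -(v * (1 - F v)))
    (fun s hs =>
      (hasDerivAt_revenue (hF s (hsub hs)) (hf s (hsub hs))).neg.congr_deriv (neg_neg _))
    ((hphic.mono hsub).mul (hfc.mono hsub)).intervalIntegrable]
  ring

theorem Gfun_eq (hF : ∀ v ∈ Icc lo hi, HasDerivAt F (f v) v) (hf : ∀ v ∈ Icc lo hi, f v ≠ 0)
    (hfc : ContinuousOn f (Icc lo hi)) (hFhi : F hi = 1) (hv : v ∈ Icc lo hi) :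
    Gfun F f hi v = phi F f v * F v + v * (1 - F v) := by
  rw [Gfun, integral_phi_mul hF hf hfc hv, hFhi]
  ring

theorem strictAntiOn_revenue (hF : ∀ v ∈ Ioo lo hi, HasDerivAt F (f v) v)
    (hf : ∀ v ∈ Ioo lo hi, 0 < f v) (hphi : ∀ v ∈ Ioo lo hi, 0 < phi F f v) :
    StrictAntiOn (fun v => v * (1 - F v)) (Ioo lo hi) := by
  have hR : ∀ v ∈ Ioo lo hi, HasDerivAt (fun v => v * (1 - F v)) (-(phi F f v * f v)) v :=
    fun v hv => hasDerivAt_revenue (hF v hv) (hf v hv).ne'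
  exact strictAntiOn_of_hasDerivWithinAt_neg (convex_Ioo lo hi)
    (fun v hv => (hR v hv).continuousAt.continuousWithinAt)
    (fun v hv => (hR v (interior_subset hv)).hasDerivWithinAt)
    (fun v hv => neg_neg_of_pos (mul_pos (hphi v (interior_subset hv)) (hf v (interior_subset hv))))

theorem strictMonoOn_of_hasDerivAt_pos {D : Set ℝ} (hD : Convex ℝ D)
    (hF : ∀ v ∈ D, HasDerivAt F (f v) v) (hf : ∀ v ∈ D, 0 < f v) : StrictMonoOn F D :=
  strictMonoOn_of_hasDerivWithinAt_pos hD
    (fun v hv => (hF v hv).continuousAt.continuousWithinAt)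
    (fun v hv => (hF v (interior_subset hv)).hasDerivWithinAt)
    (fun v hv => hf v (interior_subset hv))

end VirtualValue

theorem stmt_11_general
    (vlo vhi : ℝ) (hvlo : 0 ≤ vlo)
    (F f : ℝ → ℝ)
    (hFlo : F vlo = 0) (hFhi : F vhi = 1)
    (hFderiv : ∀ v ∈ Set.Icc vlo vhi, HasDerivAt F (f v) v)
    (hfpos : ∀ v ∈ Set.Icc vlo vhi, 0 < f v)
    (hfdiff : DifferentiableOn ℝ f (Set.Icc vlo vhi))
    (hreg : StrictMonoOn (phi F f) (Set.Icc vlo vhi))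
    (vM : ℝ) (hvM : IsLeast {v ∈ Set.Icc vlo vhi | 0 ≤ phi F f v} vM)
    (FInv : ℝ → ℝ)
    (θ : ℝ → ℝ)
    (hθ : ∀ k ∈ Set.Ioo (0:ℝ) 1, θ k ∈ Set.Icc vlo vhi ∧
      k * Gfun F f vhi (θ k) = phi F f (θ k) * (F (θ k)) ^ 2)
    (hθloc : ∀ k ∈ Set.Ioo (0:ℝ) 1, θ k ∈ Set.Ioo (max vM (FInv k)) vhi)
    :
    StrictAntiOn (fun k => θ k * (1 - k / F (θ k)) * (1 - F (θ k)))
      (Set.Ioo (0:ℝ) 1) := by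
  obtain ⟨hlo, hhi⟩ := hvM.1.1
  have hs : Ioo vM vhi ⊆ Icc vlo vhi := Ioo_subset_Icc_self.trans (Icc_subset_Icc_left hlo)
  have hF := strictMonoOn_of_hasDerivAt_pos (convex_Icc vlo vhi) hFderiv hfpos
  have hF0 : ∀ v ∈ Ioo vM vhi, 0 < F v := fun v hv =>
    hFlo ▸ hF ⟨le_rfl, hlo.trans hhi⟩ (hs hv) (hlo.trans_lt hv.1)
  have hF1 : ∀ v ∈ Ioo vM vhi, F v < 1 := fun v hv =>
    hFhi ▸ hF (hs hv) ⟨hlo.trans hhi, le_rfl⟩ hv.2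
  have hφ0 : ∀ v ∈ Ioo vM vhi, 0 < phi F f v := fun v hv =>
    hreg.pos_of_isLeast hvM ⟨hv.1, hv.2.le⟩
  have hθs : MapsTo θ (Ioo 0 1) (Ioo vM vhi) := fun k hk =>
    ⟨(le_max_left _ _).trans_lt (hθloc k hk).1, (hθloc k hk).2⟩
  refine strictAntiOn_surplus_of_foc (hreg.mono hs) (hF.mono hs)
    (strictAntiOn_revenue (fun v hv => hFderiv v (hs hv)) (fun v hv => hfpos v (hs hv)) hφ0)
    hφ0 hF0 (fun v hv => mul_pos (hvlo.trans_lt (hlo.trans_lt hv.1)) (sub_pos.2 (hF1 v hv)))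
    hθs fun k hk => ?_
  rw [← Gfun_eq hFderiv (fun v hv => (hfpos v hv).ne') hfdiff.continuousOn hFhi (hs (hθs hk))]
  exact (hθ k hk).2

/-- the monopolist's surplus `P(k) = ϑ(k)·(1 − k/F(ϑ(k)))·(1 − F(ϑ(k)))`
is strictly decreasing in `k` on `(0,1)`. -/
theorem stmt_11
    (vlo vhi : ℝ) (hvlo : 0 ≤ vlo) (hlt : vlo < vhi)
    (F f : ℝ → ℝ) (hFmono : Monotone F)
    (hFlo : F vlo = 0) (hFhi : F vhi = 1)
    (hFderiv : ∀ v ∈ Set.Icc vlo vhi, HasDerivAt F (f v) v)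
    (hfpos : ∀ v ∈ Set.Icc vlo vhi, 0 < f v)
    (hfdiff : DifferentiableOn ℝ f (Set.Icc vlo vhi))
    (hreg : StrictMonoOn (phi F f) (Set.Icc vlo vhi))
    (vM : ℝ) (hvM : IsLeast {v ∈ Set.Icc vlo vhi | 0 ≤ phi F f v} vM)
    (FInv : ℝ → ℝ)
    (hFInv : ∀ k ∈ Set.Ioo (0:ℝ) 1, FInv k ∈ Set.Icc vlo vhi ∧ F (FInv k) = k)
    (θ : ℝ → ℝ)
    (hθ : ∀ k ∈ Set.Ioo (0:ℝ) 1, θ k ∈ Set.Icc vlo vhi ∧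
      k * Gfun F f vhi (θ k) = phi F f (θ k) * (F (θ k)) ^ 2)
    (hθuniq : ∀ k ∈ Set.Ioo (0:ℝ) 1, ∀ v ∈ Set.Icc vlo vhi,
      k * Gfun F f vhi v = phi F f v * (F v) ^ 2 → v = θ k)
    (hθloc : ∀ k ∈ Set.Ioo (0:ℝ) 1, θ k ∈ Set.Ioo (max vM (FInv k)) vhi)
    :
    StrictAntiOn (fun k => θ k * (1 - k / F (θ k)) * (1 - F (θ k)))
      (Set.Ioo (0:ℝ) 1) :=
  stmt_11_general vlo vhi hvlo F f hFlo hFhi hFderiv hfpos hfdiff hreg vM hvM FInv θ hθ hθloc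
end
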